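/- The group PSL_2(F_q) is simple for every prime power q ≥ 4. -/

import Mathlib

/-- `PSL₂(F_q) = SL₂(F_q)/center` is a simple group for every prime power `q ≥ 4`. -/
theorem PSL2_simple_of_card_ge_four
    (F : Type*) [Field F] [Fintype F] (hq : 4 ≤ Fintype.card F) :
    IsSimpleGroup
      (Matrix.SpecialLinearGroup (Fin 2) F ⧸
        Subgroup.center (Matrix.SpecialLinearGroup (Fin 2) F)) :=
  Matrix.ProjectiveSpecialLinearGroup.rank_two_simple (Nat.card_eq_fintype_card (α := F) ▸ hq)
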